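/- Let A = (Q, Σ, δ, s, F) be a DFA in which the initial state s has no incoming transitions and every state is reachable from s, let u ∈ Q, and let k ≥ 1 be such that inf I_u has length at least k (possibly infinite). Write inf I_u = γ · α where α ∈ Σ* is the length-k suffix of inf I_u and γ ∈ Σ* ∪ Σ^ω. Then there exists a state v ∈ Q such that δ(v, α) = u and inf I_v = γ. -/

import Mathlib

/-- A (possibly left-infinite) string over alphabet `A`, indexed from the END:
`f i` is the `i`-th character from the right, and `⊥` means the position is
past the beginning of the string.  The elements of `Σ* ∪ Σ^ω` are the
well-formed (`CStr.WF`) such functions. -/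
abbrev CStr (A : Type*) := ℕ → WithBot A

/-- Well-formed: once we run out of characters going leftwards, it stays so. -/
def CStr.WF {A : Type*} (f : CStr A) : Prop := ∀ i, f i = ⊥ → f (i + 1) = ⊥

/-- The string is finite (an element of `Σ*`). -/
def CStr.Finite {A : Type*} (f : CStr A) : Prop := ∃ i, f i = ⊥

/-- Length of a finite string. -/
noncomputable def CStr.length {A : Type*} (f : CStr A) : ℕ := sInf {i | f i = ⊥}

/-- A finite string, given as a list read left-to-right, viewed as a `CStr`. -/
def CStr.ofList {A : Type*} (w : List A) : CStr A := fun i =>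
  if h : i < w.length then (w.get ⟨w.length - 1 - i, by omega⟩ : WithBot A) else ⊥

/-- The co-lexicographic (strict) order on `Σ* ∪ Σ^ω`: compare the last
characters first (position `0`), a missing character (`⊥`) being smaller
than every character of the alphabet. -/
def colexLt {A : Type*} [LinearOrder A] (f g : CStr A) : Prop :=
  ∃ i, (∀ j, j < i → f j = g j) ∧ f i < g i

/-- The non-strict co-lex order. -/
def colexLe {A : Type*} [LinearOrder A] (f g : CStr A) : Prop := colexLt f g ∨ f = g

/-- `g` is the greatest lower bound (infimum) of `S` in `(Σ* ∪ Σ^ω, ≤)`. -/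
def IsColexGLB {A : Type*} [LinearOrder A] (S : Set (CStr A)) (g : CStr A) : Prop :=
  g.WF ∧ (∀ f ∈ S, colexLe g f) ∧ ∀ h, CStr.WF h → (∀ f ∈ S, colexLe h f) → colexLe h g

/-- `g` is the least upper bound (supremum) of `S` in `(Σ* ∪ Σ^ω, ≤)`. -/
def IsColexLUB {A : Type*} [LinearOrder A] (S : Set (CStr A)) (g : CStr A) : Prop :=
  g.WF ∧ (∀ f ∈ S, colexLe f g) ∧ ∀ h, CStr.WF h → (∀ f ∈ S, colexLe f h) → colexLe g h

/-- A DFA `(Q, A, δ, start, accept)` with a partial transition function. -/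
structure PDFA (A Q : Type*) where
  δ : Q → A → Option Q
  start : Q
  accept : Set Q

/-- The transition function extended to finite strings (read left-to-right). -/
def PDFA.δStar {A Q : Type*} (M : PDFA A Q) : Q → List A → Option Q
  | q, [] => some q
  | q, a :: w => (M.δ q a).bind fun q' => M.δStar q' w

/-- `I_u`: the set of finite strings reaching `u` from the initial state. -/
def PDFA.I {A Q : Type*} (M : PDFA A Q) (u : Q) : Set (List A) :=
  {w | M.δStar M.start w = some u}

/-- The initial state has no incoming transitions. -/
def PDFA.NoIncomingStart {A Q : Type*} (M : PDFA A Q) : Prop :=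
  ∀ v a, M.δ v a ≠ some M.start

/-- Every state is reachable from the initial state. -/
def PDFA.Reachable {A Q : Type*} (M : PDFA A Q) : Prop :=
  ∀ u, ∃ w : List A, M.δStar M.start w = some u

/-- Input consistency: all transitions entering a state `u` carry the same
label `lam u`. -/
def PDFA.InputConsistent {A Q : Type*} (M : PDFA A Q) (lam : Q → A) : Prop :=
  ∀ v a u, M.δ v a = some u → lam u = a

/-- The maximum co-lex order `<_A` on the states of a DFA:
`u <_A v` iff `α < β` for every `α ∈ I_u` and every `β ∈ I_v`. -/
def PDFA.colexStateLt {A Q : Type*} [LinearOrder A] (M : PDFA A Q) (u v : Q) : Prop :=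
  ∀ α ∈ M.I u, ∀ β ∈ M.I v, colexLt (CStr.ofList α) (CStr.ofList β)

/-- `suf_k`: the length-`k` suffix of a string; positions `≥ k` are cut off.
(The `⊥` entries at positions `< k` play the role of the left-padding symbol
`#`, which is smaller than every character of the alphabet.) -/
def CStr.suf {A : Type*} (k : ℕ) (f : CStr A) : CStr A := fun i => if i < k then f i else ⊥

/-- `β^ω · α` : the left-infinite string obtained by concatenating infinitely
many copies of `β`, followed (at the right end) by `α`. -/
def CStr.omegaAppend {A : Type*} (b a : List A) : CStr A := fun i =>
  if i < a.length then CStr.ofList a i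
  else CStr.ofList b ((i - a.length) % b.length)

/-- Appending one character at the (right) end of a possibly infinite string. -/
def CStr.snoc {A : Type*} (f : CStr A) (a : A) : CStr A := fun i =>
  match i with
  | 0 => (a : WithBot A)
  | Nat.succ j => f j

/-- Removing the last `k` characters of a string. -/
def CStr.drop {A : Type*} (f : CStr A) (k : ℕ) : CStr A := fun i => f (i + k)

/-- `suf_m(x)` is a prefix of `suf_{2m}(y)`. -/
def ExtPrefix {A : Type*} (x y : CStr A) (m : ℕ) : Prop := ∀ j, j < m → x j = y (m + j)

/-- The set of extenders of `u` at distance `m` (used with `m = 2^k`), where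
`g u` denotes the infimum string `inf I_u`:
`P(u) = {v ∈ Q : δ(v, suf_m(inf I_u)) = u ∧ suf_m(inf I_v) is a prefix of suf_{2m}(inf I_u)}`.
(The first condition is expressed by exhibiting the genuine length-`m` word
`w = suf_m(inf I_u)` over the alphabet; if `inf I_u` is shorter than `m`, the
padded suffix contains `#` and no state can read it, as `# ∉ Σ`.) -/
def PDFA.Pset {A Q : Type*} (M : PDFA A Q) (g : Q → CStr A) (m : ℕ) (u : Q) : Set Q :=
  {v | (∃ w : List A, w.length = m ∧ (∀ j, j < m → CStr.ofList w j = g u j) ∧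
          M.δStar v w = some u) ∧ ExtPrefix (g v) (g u) m}

section Aux

variable {A : Type*} [LinearOrder A]

lemma colexLe_refl (f : CStr A) : colexLe f f := Or.inr rfl

lemma colexLt_irrefl (f : CStr A) : ¬ colexLt f f := by
  rintro ⟨i, -, hi⟩; exact lt_irrefl _ hi

lemma colexLe_antisymm {f g : CStr A} (h1 : colexLe f g) (h2 : colexLe g f) : f = g := by
  rcases h1 with ⟨i, hai, hi⟩ | rfl
  · rcases h2 with ⟨j, haj, hj⟩ | rfl
    · rcases lt_trichotomy i j with hij | rfl | hij
      · exact absurd (haj i hij ▸ hi) (lt_irrefl _)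
      · exact absurd (hj.trans hi) (lt_irrefl _)
      · exact absurd (hai j hij ▸ hj) (lt_irrefl _)
    · exact absurd hi (lt_irrefl _)
  · rfl

lemma colexLt_trans {f g h : CStr A} (h1 : colexLt f g) (h2 : colexLt g h) : colexLt f h := by
  obtain ⟨i, hai, hi⟩ := h1
  obtain ⟨j, haj, hj⟩ := h2
  rcases lt_trichotomy i j with hij | rfl | hij
  · exact ⟨i, fun m hm => (hai m hm).trans (haj m (hm.trans hij)), haj i hij ▸ hi⟩
  · exact ⟨i, fun m hm => (hai m hm).trans (haj m hm), hi.trans hj⟩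
  · exact ⟨j, fun m hm => (hai m (hm.trans hij)).trans (haj m hm), hai j hij ▸ hj⟩

lemma colexLe_trans {f g h : CStr A} (h1 : colexLe f g) (h2 : colexLe g h) : colexLe f h := by
  rcases h1 with h1 | rfl
  · rcases h2 with h2 | rfl
    · exact Or.inl (colexLt_trans h1 h2)
    · exact Or.inl h1
  · exact h2

lemma colexLe_total (f g : CStr A) : colexLe f g ∨ colexLe g f := by
  by_cases hfg : f = g
  · exact Or.inl (Or.inr hfg)
  · have hex : ∃ i, f i ≠ g i := by
      by_contra hc; push_neg at hc; exact hfg (funext hc)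
    classical
    have hag : ∀ j, j < Nat.find hex → f j = g j := fun j hj => by
      by_contra hc; exact absurd hj (not_lt.2 (Nat.find_le hc))
    rcases lt_or_gt_of_ne (Nat.find_spec hex) with h | h
    · exact Or.inl (Or.inl ⟨_, hag, h⟩)
    · exact Or.inr (Or.inl ⟨_, fun j hj => (hag j hj).symm, h⟩)

/-- If not `h ≤ γ` then `γ < h`. -/
lemma colexLt_of_not_le {h γ : CStr A} (hn : ¬ colexLe h γ) : colexLt γ h := by
  rcases colexLe_total γ h with hle | hle
  · rcases hle with hle | heq
    · exact hle
    · exact absurd (Or.inr heq.symm) hn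
  · exact absurd hle hn

/-- The key lifting lemma: comparing strings with a common final segment
(at positions `< k`) is the same as comparing the strings with that segment
removed. -/
lemma colexLe_lift (k : ℕ) (x y x' y' : CStr A)
    (hpre : ∀ j, j < k → x j = y j)
    (hx : ∀ j, x (k + j) = x' j) (hy : ∀ j, y (k + j) = y' j) :
    colexLe x' y' ↔ colexLe x y := by
  constructor
  · rintro (⟨i, hag, hi⟩ | heq)
    · refine Or.inl ⟨k + i, fun j hj => ?_, by rw [hx, hy]; exact hi⟩
      rcases lt_or_ge j k with h | h
      · exact hpre j h
      · have hj' : j = k + (j - k) := by omega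
        rw [hj', hx, hy]; exact hag _ (by omega)
    · refine Or.inr (funext fun j => ?_)
      rcases lt_or_ge j k with h | h
      · exact hpre j h
      · have hj' : j = k + (j - k) := by omega
        rw [hj', hx, hy, heq]
  · rintro (⟨i, hag, hi⟩ | heq)
    · rcases lt_or_ge i k with h | h
      · exact absurd (hpre i h ▸ hi) (lt_irrefl _)
      · refine Or.inl ⟨i - k, fun j hj => ?_, ?_⟩
        · rw [← hx, ← hy]; exact hag _ (by omega)
        · have : i = k + (i - k) := by omega
          rw [← hx, ← hy, ← this]; exact hi
    · refine Or.inr (funext fun j => ?_)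
      rw [← hx, ← hy, heq]

lemma ofList_lt_length {w : List A} {j : ℕ} (hj : j < w.length) :
    CStr.ofList w j = (w.get ⟨w.length - 1 - j, by omega⟩ : WithBot A) := dif_pos hj

lemma ofList_eq_bot {w : List A} {j : ℕ} (hj : ¬ j < w.length) :
    CStr.ofList w j = ⊥ := dif_neg hj

lemma getElem_ix {B : Type*} {l : List B} {i j : ℕ} (h : i = j) (hi : i < l.length) :
    l[i]'hi = l[j]'(h ▸ hi) := by subst h; rfl

lemma ofList_ne_bot {w : List A} {j : ℕ} (hj : j < w.length) :
    CStr.ofList w j ≠ ⊥ := by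
  rw [ofList_lt_length hj]; exact WithBot.coe_ne_bot

lemma lt_length_of_ofList_ne_bot {w : List A} {j : ℕ} (h : CStr.ofList w j ≠ ⊥) :
    j < w.length := by
  by_contra hc; exact h (dif_neg hc)

lemma ofList_WF (w : List A) : (CStr.ofList w).WF := by
  intro i hi
  have hi' : ¬ i < w.length := fun hc => ofList_ne_bot hc hi
  exact ofList_eq_bot (by omega)

lemma ofList_append_lt {w α : List A} {j : ℕ} (hj : j < α.length) :
    CStr.ofList (w ++ α) j = CStr.ofList α j := by
  have h1 : j < (w ++ α).length := by simp; omega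
  rw [ofList_lt_length h1, ofList_lt_length hj]
  norm_cast
  rw [List.get_eq_getElem, List.get_eq_getElem,
    getElem_ix (show (w ++ α).length - 1 - j = w.length + (α.length - 1 - j) by
      simp; omega),
    List.getElem_append_right (Nat.le_add_right _ _),
    getElem_ix (show w.length + (α.length - 1 - j) - w.length = α.length - 1 - j by omega)]

lemma ofList_append_ge {w α : List A} {j : ℕ} (hj : α.length ≤ j) :
    CStr.ofList (w ++ α) j = CStr.ofList w (j - α.length) := by
  rcases lt_or_ge j (w ++ α).length with h1 | h1
  · have h2 : j - α.length < w.length := by simp at h1; omega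
    rw [ofList_lt_length h1, ofList_lt_length h2]
    norm_cast
    rw [List.get_eq_getElem, List.get_eq_getElem,
      getElem_ix (show (w ++ α).length - 1 - j = w.length - 1 - (j - α.length) by
        simp; omega),
      List.getElem_append_left (by omega)]
  · rw [ofList_eq_bot (by omega), ofList_eq_bot (by simp at h1 ⊢; omega)]

/-- Extracting a suffix: if the last `α.length` characters of `β` coincide
with `α`, then `β = β' ++ α`. -/
lemma exists_suffix_decomp {α β : List A} (hk : α.length ≤ β.length)
    (h : ∀ j, j < α.length → CStr.ofList β j = CStr.ofList α j) :
    ∃ β', β = β' ++ α := by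
  refine ⟨β.take (β.length - α.length), ?_⟩
  conv_lhs => rw [← List.take_append_drop (β.length - α.length) β]
  congr 1
  apply List.ext_getElem
  · rw [List.length_drop]; omega
  · intro m hm1 hm2
    have hm1' : m < β.length - (β.length - α.length) := by
      rw [← List.length_drop]; exact hm1
    have hj : α.length - 1 - m < α.length := by omega
    have hbj : α.length - 1 - m < β.length := by omega
    have heq := h _ hj
    rw [ofList_lt_length hbj, ofList_lt_length hj] at heq
    norm_cast at heq
    rw [List.get_eq_getElem, List.get_eq_getElem] at heq
    calc (β.drop (β.length - α.length))[m]'hm1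
        = β[(β.length - α.length) + m]'(by omega) := (List.getElem_drop' (xs := β) (i := β.length - α.length) (j := m) (by omega)).symm
      _ = β[β.length - 1 - (α.length - 1 - m)]'(by omega) := getElem_ix (by omega) _
      _ = α[α.length - 1 - (α.length - 1 - m)]'(by omega) := heq
      _ = α[m]'hm2 := getElem_ix (by omega) _

lemma exists_colex_min {ι : Type*} (s : Finset ι) (hne : s.Nonempty) (h : ι → CStr A) :
    ∃ v ∈ s, ∀ v' ∈ s, colexLe (h v) (h v') := by
  classical
  induction s using Finset.induction_on with
  | empty => exact absurd hne (by simp)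
  | @insert a t hat ih =>
    rcases t.eq_empty_or_nonempty with rfl | htne
    · refine ⟨a, by simp, fun v' hv' => ?_⟩
      simp at hv'
      subst hv'
      exact colexLe_refl _
    · obtain ⟨v0, hv0t, hv0⟩ := ih htne
      rcases colexLe_total (h a) (h v0) with hle | hle
      · refine ⟨a, Finset.mem_insert_self _ _, fun v' hv' => ?_⟩
        rcases Finset.mem_insert.1 hv' with rfl | hv'
        · exact colexLe_refl _
        · exact colexLe_trans hle (hv0 v' hv')
      · refine ⟨v0, Finset.mem_insert_of_mem hv0t, fun v' hv' => ?_⟩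
        rcases Finset.mem_insert.1 hv' with rfl | hv'
        · exact hle
        · exact hv0 v' hv'

/-- Approximation lemma: elements of `S` agree with the infimum of `S` on any
initial (from the right) segment where the infimum has no `⊥`. -/
lemma glb_approx [Fintype A] {S : Set (CStr A)} {g : CStr A}
    (hg : IsColexGLB S g) (hS : S.Nonempty) (k : ℕ)
    (hbot : ∀ j, j < k → g j ≠ ⊥) :
    ∃ f ∈ S, ∀ j, j < k → f j = g j := by
  classical
  obtain ⟨hWF, hLB, hGLB⟩ := hg
  induction k with
  | zero => obtain ⟨f, hf⟩ := hS; exact ⟨f, hf, by omega⟩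
  | succ k ih =>
    obtain ⟨f, hfS, hf⟩ := ih (fun j hj => hbot j (by omega))
    by_contra hno
    push_neg at hno
    -- every f' ∈ S agreeing with g on [0,k) satisfies g k < f' k
    have hgt : ∀ f' ∈ S, (∀ j, j < k → f' j = g j) → g k < f' k := by
      intro f' hf'S hf'
      have hne : f' k ≠ g k := by
        intro hc
        obtain ⟨j, hjk, hj⟩ := hno f' hf'S
        rcases lt_or_ge j k with h1 | h1
        · exact hj (hf' j h1)
        · exact hj (by rw [show j = k by omega]; exact hc)
      rcases hLB f' hf'S with ⟨i, hag, hi⟩ | heq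
      · rcases lt_trichotomy i k with h1 | rfl | h1
        · exact absurd (hf' i h1 ▸ hi) (lt_irrefl _)
        · exact hi
        · exact absurd (hag k h1).symm hne
      · exact absurd (congrFun heq k).symm hne
    -- take the minimal value at position k among such f'
    haveI : Finite (WithBot A) := inferInstanceAs (Finite (Option A))
    set T : Set (WithBot A) := {x | ∃ f' ∈ S, (∀ j, j < k → f' j = g j) ∧ f' k = x} with hT
    have hTne : T.Nonempty := ⟨f k, f, hfS, hf, rfl⟩
    obtain ⟨c, hcT, hcmin⟩ := Set.exists_min_image T id (Set.toFinite T) hTne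
    obtain ⟨fc, hfcS, hfc, hfck⟩ := hcT
    have hgc : g k < c := hfck ▸ hgt fc hfcS hfc
    -- the competitor string h
    set h : CStr A := fun i => if i < k then g i else if i ≤ k then c else ⊥ with hdefh
    have hWFh : h.WF := by
      intro i hi
      simp only [hdefh] at hi ⊢
      rcases lt_trichotomy i k with h1 | h1 | h1
      · rw [if_pos h1] at hi
        exact absurd hi (hbot i (by omega))
      · rw [if_neg (by omega), if_pos (by omega : i ≤ k)] at hi
        rw [hi] at hgc
        exact absurd hgc (by simp)
      · rw [if_neg (by omega), if_neg (by omega)]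
    have hLBh : ∀ f' ∈ S, colexLe h f' := by
      intro f' hf'S
      by_cases hagree : ∀ j, j < k → f' j = g j
      · have hck : c ≤ f' k := hcmin (f' k) ⟨f', hf'S, hagree, rfl⟩
        rcases lt_or_eq_of_le hck with hck | hck
        · refine Or.inl ⟨k, fun j hj => ?_, ?_⟩
          · simp only [hdefh]; rw [if_pos hj]; exact (hagree j hj).symm
          · simp only [hdefh]; rw [if_neg (lt_irrefl k), if_pos (le_refl k)]; exact hck
        · -- c = f' k ; compare beyond position k
          by_cases hbig : ∀ j, k < j → f' j = ⊥
          · refine Or.inr (funext fun j => ?_)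
            simp only [hdefh]
            rcases lt_trichotomy j k with h1 | h1 | h1
            · rw [if_pos h1]; exact (hagree j h1).symm
            · rw [if_neg (by omega), if_pos (by omega : j ≤ k)]
              rw [h1]; exact hck
            · rw [if_neg (by omega), if_neg (by omega)]; exact (hbig j h1).symm
          · push_neg at hbig
            obtain ⟨j1, hj1k, hj1⟩ := hbig
            have hex : ∃ m, f' (k + 1 + m) ≠ ⊥ := ⟨j1 - (k + 1), by
              rw [show k + 1 + (j1 - (k+1)) = j1 by omega]; exact hj1⟩
            refine Or.inl ⟨k + 1 + Nat.find hex, fun j hj => ?_, ?_⟩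
            · simp only [hdefh]
              rcases lt_trichotomy j k with h1 | h1 | h1
              · rw [if_pos h1]; exact (hagree j h1).symm
              · rw [if_neg (by omega), if_pos (by omega : j ≤ k)]
                rw [h1]; exact hck
              · rw [if_neg (by omega), if_neg (by omega)]
                by_contra hc
                have hpj : f' (k + 1 + (j - (k+1))) ≠ ⊥ := by
                  rw [show k + 1 + (j - (k+1)) = j by omega]
                  exact fun hb => hc hb.symm
                have := Nat.find_min' hex hpj
                omega
            · have h1 : h (k + 1 + Nat.find hex) = ⊥ := by
                simp only [hdefh]; rw [if_neg (by omega), if_neg (by omega)]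
              rw [h1]
              exact Ne.bot_lt' (Ne.symm (Nat.find_spec hex))
      · push_neg at hagree
        obtain ⟨j0, hj0k, hj0⟩ := hagree
        rcases hLB f' hf'S with ⟨i, hag, hi⟩ | heq
        · have hik : i < k := by
            by_contra hc
            exact hj0 (hag j0 (by omega)).symm
          refine Or.inl ⟨i, fun j hj => ?_, ?_⟩
          · simp only [hdefh]; rw [if_pos (by omega)]; exact hag j hj
          · simp only [hdefh]; rw [if_pos hik]; exact hi
        · exact absurd (congrFun heq j0).symm hj0
    have hle : colexLe h g := hGLB h hWFh hLBh
    have hlt : colexLt g h := ⟨k, fun j hj => by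
      simp only [hdefh]; rw [if_pos hj],
      by simp only [hdefh]; rw [if_neg (lt_irrefl k), if_pos (le_refl k)]; exact hgc⟩
    have heq := colexLe_antisymm hle (Or.inl hlt)
    rw [heq] at hlt
    exact colexLt_irrefl _ hlt

lemma δStar_append {Q : Type*} (M : PDFA A Q) (q : Q) (w w' : List A) :
    M.δStar q (w ++ w') = (M.δStar q w).bind (fun r => M.δStar r w') := by
  induction w generalizing q with
  | nil => simp [PDFA.δStar]
  | cons a w ih =>
    simp only [List.cons_append, PDFA.δStar]
    cases M.δ q a with
    | none => simp
    | some q' => simp [ih]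

end Aux

/-- For a DFA whose initial state has no incoming
transitions and all of whose states are reachable, a state `u`, and `k ≥ 1`
such that `inf I_u` has length at least `k`, write `inf I_u = γ · α` where
`α ∈ Σ*` is the length-`k` suffix of `inf I_u`.  Then there exists a state
`v` with `δ(v, α) = u` and `inf I_v = γ`. -/
theorem infimum_suffix_has_extender_state
    {A Q : Type*} [LinearOrder A] [Fintype A] [Fintype Q]
    (M : PDFA A Q) (hstart : M.NoIncomingStart) (hreach : M.Reachable)
    (u : Q) (γu : CStr A)
    (hinf : IsColexGLB (CStr.ofList '' M.I u) γu)
    (k : ℕ) (hk : 1 ≤ k) (α : List A) (hlen : α.length = k)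
    (hsuf : ∀ j, j < k → CStr.ofList α j = γu j) :
    ∃ v, M.δStar v α = some u ∧
      IsColexGLB (CStr.ofList '' M.I v) (CStr.drop γu k) := by
  classical
  obtain ⟨hWFu, hLBu, hGLBu⟩ := hinf
  -- positions < k of γu are not ⊥
  have hnb : ∀ j, j < k → γu j ≠ ⊥ := fun j hj => by
    rw [← hsuf j hj]; exact ofList_ne_bot (by omega)
  -- I u is nonempty
  have hSne : (CStr.ofList '' M.I u).Nonempty := by
    obtain ⟨w, hw⟩ := hreach u
    exact ⟨CStr.ofList w, w, hw, rfl⟩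
  -- γ := drop γu k is well-formed
  have hγWF : (CStr.drop γu k).WF := by
    intro i hi
    have : γu (i + k) = ⊥ := hi
    have := hWFu (i + k) this
    show γu (i + 1 + k) = ⊥
    rw [show i + 1 + k = i + k + 1 by omega]
    exact this
  -- γ is a lower bound of I v whenever δStar v α = some u
  have hγLB : ∀ v, M.δStar v α = some u →
      ∀ f ∈ CStr.ofList '' M.I v, colexLe (CStr.drop γu k) f := by
    rintro v hv f ⟨w, hw, rfl⟩
    have hwu : w ++ α ∈ M.I u := by
      show M.δStar M.start (w ++ α) = some u
      rw [δStar_append, hw]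
      exact hv
    have hle := hLBu _ ⟨w ++ α, hwu, rfl⟩
    refine (colexLe_lift k γu (CStr.ofList (w ++ α)) (CStr.drop γu k) (CStr.ofList w)
      (fun j hj => ?_) (fun j => ?_) (fun j => ?_)).mpr hle
    · rw [← hsuf j hj, ofList_append_lt (by omega)]
    · show γu (k + j) = γu (j + k); rw [Nat.add_comm]
    · rw [ofList_append_ge (by omega), hlen]
      congr 1
      omega
  by_contra hno
  push_neg at hno
  -- choose for each candidate v a better lower bound of I v
  have hch : ∀ v : Q, ∃ h : CStr A, M.δStar v α = some u →
      (h.WF ∧ (∀ f ∈ CStr.ofList '' M.I v, colexLe h f) ∧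
        colexLt (CStr.drop γu k) h) := by
    intro v
    by_cases hv : M.δStar v α = some u
    · have hng := hno v hv
      have : ¬ ∀ h, CStr.WF h → (∀ f ∈ CStr.ofList '' M.I v, colexLe h f) →
          colexLe h (CStr.drop γu k) := by
        intro hc
        exact hng ⟨hγWF, hγLB v hv, hc⟩
      push_neg at this
      obtain ⟨h, hWFh, hLBh, hnle⟩ := this
      exact ⟨h, fun _ => ⟨hWFh, hLBh, colexLt_of_not_le hnle⟩⟩
    · exact ⟨fun _ => ⊥, fun hv' => absurd hv' hv⟩
  choose hf hfspec using hch
  -- the candidate set V is nonempty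
  set V : Finset Q := Finset.univ.filter (fun v => M.δStar v α = some u) with hV
  have hVne : V.Nonempty := by
    obtain ⟨g0, ⟨β, hβ, rfl⟩, hagree⟩ := glb_approx ⟨hWFu, hLBu, hGLBu⟩ hSne k hnb
    have hβlen : k ≤ β.length := by
      have := hagree (k - 1) (by omega)
      have hne := this ▸ hnb (k - 1) (by omega)
      have := lt_length_of_ofList_ne_bot hne
      omega
    obtain ⟨β', rfl⟩ := exists_suffix_decomp (α := α) (β := β) (by omega)
      (fun j hj => by rw [hagree j (by omega), ← hsuf j (by omega)])
    have hβu : M.δStar M.start (β' ++ α) = some u := hβ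
    rw [δStar_append] at hβu
    rcases hv1 : M.δStar M.start β' with _ | v1
    · rw [hv1] at hβu; simp at hβu
    · rw [hv1] at hβu
      exact ⟨v1, by simp [hV]; exact hβu⟩
  obtain ⟨v0, hv0V, hv0min⟩ := exists_colex_min V hVne hf
  have hv0 : M.δStar v0 α = some u := by
    rw [hV] at hv0V; simpa using hv0V
  obtain ⟨h0WF, h0LB, h0gt⟩ := hfspec v0 hv0
  -- the extended competitor H = (hf v0) · α
  set H : CStr A := fun i => if i < k then CStr.ofList α i else hf v0 (i - k) with hH
  have hHk : ∀ j, H (k + j) = hf v0 j := by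
    intro j
    simp only [hH]
    rw [if_neg (by omega)]
    congr 1
    omega
  have hHlt : ∀ j, j < k → H j = CStr.ofList α j := fun j hj => by
    simp only [hH]; rw [if_pos hj]
  have hHWF : H.WF := by
    intro i hi
    rcases lt_or_ge i k with h1 | h1
    · rw [hHlt i h1] at hi
      exact absurd hi (ofList_ne_bot (by omega))
    · have h2 : hf v0 (i - k) = ⊥ := by
        rw [← hHk (i - k), show k + (i - k) = i by omega]; exact hi
      have := h0WF (i - k) h2
      rw [show i + 1 = k + (i - k + 1) by omega, hHk]
      exact this
  have hHLB : ∀ f ∈ CStr.ofList '' M.I u, colexLe H f := by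
    rintro f ⟨β, hβ, rfl⟩
    by_cases hagree : ∀ j, j < k → CStr.ofList β j = γu j
    · -- β ends with α
      have hβlen : k ≤ β.length := by
        have := hagree (k - 1) (by omega)
        have hne := this ▸ hnb (k - 1) (by omega)
        have := lt_length_of_ofList_ne_bot hne
        omega
      obtain ⟨β', rfl⟩ := exists_suffix_decomp (α := α) (β := β) (by omega)
        (fun j hj => by rw [hagree j (by omega), ← hsuf j (by omega)])
      have hβu : M.δStar M.start (β' ++ α) = some u := hβ
      rw [δStar_append] at hβu
      rcases hv1 : M.δStar M.start β' with _ | v1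
      · rw [hv1] at hβu; simp at hβu
      · rw [hv1] at hβu
        have hv1V : v1 ∈ V := by simp [hV]; exact hβu
        have h1 : colexLe (hf v0) (hf v1) := hv0min v1 hv1V
        have h2 : colexLe (hf v1) (CStr.ofList β') :=
          (hfspec v1 hβu).2.1 _ ⟨β', hv1, rfl⟩
        have h3 : colexLe (hf v0) (CStr.ofList β') := colexLe_trans h1 h2
        refine (colexLe_lift k H (CStr.ofList (β' ++ α)) (hf v0) (CStr.ofList β')
          (fun j hj => ?_) (fun j => hHk j) (fun j => ?_)).mp h3
        · rw [hHlt j hj, ofList_append_lt (by omega)]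
        · rw [ofList_append_ge (by omega), hlen]
          congr 1
          omega
    · -- β differs from γu within the last k characters
      push_neg at hagree
      obtain ⟨j0, hj0k, hj0⟩ := hagree
      rcases hLBu _ ⟨β, hβ, rfl⟩ with ⟨i, hag, hi⟩ | heq
      · have hik : i < k := by
          by_contra hc
          exact hj0 (hag j0 (by omega)).symm
        refine Or.inl ⟨i, fun j hj => ?_, ?_⟩
        · rw [hHlt j (by omega), hsuf j (by omega)]
          exact hag j hj
        · rw [hHlt i hik, hsuf i hik]
          exact hi
      · exact absurd (congrFun heq j0).symm hj0
  -- conclude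
  have hHγ : colexLe H γu := hGLBu H hHWF hHLB
  have hstrip : colexLe (hf v0) (CStr.drop γu k) := by
    refine (colexLe_lift k H γu (hf v0) (CStr.drop γu k)
      (fun j hj => ?_) (fun j => hHk j) (fun j => ?_)).mpr hHγ
    · rw [hHlt j hj, hsuf j hj]
    · show γu (k + j) = γu (j + k); rw [Nat.add_comm]
  have heq := colexLe_antisymm hstrip (Or.inl h0gt)
  rw [heq] at h0gt
  exact colexLt_irrefl _ h0gt
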